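/- Let 0 < a < b, c > 1, and 0 < α < α_c := sqrt((c^2-1)/(b c^2 - a)). Define Q̂₊(ξ) = iξc + iξŜ(ξ) with Ŝ(ξ) = sqrt((1+aξ^2)/(1+bξ^2)). Then for all real k, with ξ = k + iα, we have -2αc < Re Q̂₊(ξ) < -αc. -/

import Mathlib

/-! With `ξ = k + iα`, `w = (1 + aξ²)/(1 + bξ²)` and `S = √w = x + iy`, one has
`Re Q̂₊ = -αc - Im (ξS)`, so the claim is `0 < Im (ξS) = αx + ky < αc`. Here `x > 0` because
`Re w > 0`, and `ky ≤ 0` because `k Im w ≤ 0`. The upper bound then follows from `x ≤ |S| < c`,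
i.e. `|1 + aξ²| < c² |1 + bξ²|`, which is where `α < α_c` enters. For the lower bound,
`2 Re (ξS) Im (ξS) = Im (ξ² w)`, and for `k ≠ 0` both `k Re (ξS)` and `k Im (ξ² w)` are positive. -/

open Complex

namespace Complex

lemma re_cpow_half_pos {w : ℂ} (hw : 0 < w.re) : 0 < (w ^ (1 / 2 : ℂ)).re := by
  rw [one_div, cpow_inv_two_re]
  exact Real.sqrt_pos.mpr (by linarith [w.abs_re_le_norm, le_abs_self w.re])

lemma cpow_half_sq (w : ℂ) : (w ^ (1 / 2 : ℂ)) ^ 2 = w := by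
  rw [one_div]
  exact_mod_cast cpow_nat_inv_pow w two_ne_zero

lemma mul_im_nonpos_of_mul_im_sq_nonpos {r : ℝ} {s : ℂ} (hs : 0 < s.re)
    (h : r * (s ^ 2).im ≤ 0) : r * s.im ≤ 0 := by
  have h2 : (s ^ 2).im = 2 * s.re * s.im := by rw [pow_two, mul_im]; ring
  rw [h2] at h
  nlinarith

lemma im_mul_pos {ξ s : ℂ} (hξ : 0 < ξ.im) (hs : 0 < s.re) (hsign : ξ.re * (s ^ 2).im ≤ 0)
    (hsq : ξ.re ≠ 0 → 0 < ξ.re * (ξ ^ 2 * s ^ 2).im) : 0 < (ξ * s).im := by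
  have hky := mul_im_nonpos_of_mul_im_sq_nonpos hs hsign
  have him : (ξ * s).im = ξ.im * s.re + ξ.re * s.im := by rw [mul_im]; ring
  rcases eq_or_ne ξ.re 0 with hk | hk
  · rw [him, hk]; simpa using mul_pos hξ hs
  have hre : 0 < ξ.re * (ξ * s).re := by
    simp only [mul_re]
    nlinarith [mul_pos (mul_self_pos.mpr hk) hs, mul_nonpos_iff.mpr (Or.inl ⟨hξ.le, hky⟩)]
  have hsq' : (ξ ^ 2 * s ^ 2).im = 2 * (ξ * s).re * (ξ * s).im := by
    rw [← mul_pow, pow_two, mul_im]; ring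
  have := hsq hk
  rw [hsq'] at this
  nlinarith

lemma im_mul_lt {ξ s : ℂ} {c : ℝ} (hξ : 0 < ξ.im) (hs : 0 < s.re)
    (hsign : ξ.re * (s ^ 2).im ≤ 0) (hc : 0 ≤ c) (hnorm : ‖s ^ 2‖ < c ^ 2) :
    (ξ * s).im < ξ.im * c := by
  have hky := mul_im_nonpos_of_mul_im_sq_nonpos hs hsign
  have hsc : s.re < c :=
    (re_le_norm s).trans_lt <| (pow_lt_pow_iff_left₀ (norm_nonneg s) hc two_ne_zero).mp
      (by rwa [← norm_pow])
  have him : (ξ * s).im = ξ.im * s.re + ξ.re * s.im := by rw [mul_im]; ring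
  rw [him]
  nlinarith

end Complex

noncomputable def quadRatio (a b : ℝ) (ξ : ℂ) : ℂ := (1 + (a : ℂ) * ξ ^ 2) / (1 + (b : ℂ) * ξ ^ 2)

section
variable {a b : ℝ} {ξ : ℂ}

lemma re_one_add_mul_sq_pos (hb : 0 ≤ b) (hbξ : b * ξ.im ^ 2 < 1) :
    0 < (1 + (b : ℂ) * ξ ^ 2).re := by
  simp only [add_re, one_re, ofReal_re, ofReal_im, pow_two, mul_re, mul_im]
  nlinarith [mul_nonneg hb (mul_self_nonneg ξ.re)]

lemma quadRatio_mul_normSq (h : (1 + (b : ℂ) * ξ ^ 2) ≠ 0) :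
    quadRatio a b ξ * (normSq (1 + (b : ℂ) * ξ ^ 2) : ℂ) =
      (1 + (a : ℂ) * ξ ^ 2) * (starRingEnd ℂ) (1 + (b : ℂ) * ξ ^ 2) := by
  rw [quadRatio, ← mul_conj, ← mul_assoc, div_mul_cancel₀ _ h]

lemma quadRatio_re_mul_normSq (h : (1 + (b : ℂ) * ξ ^ 2) ≠ 0) :
    (quadRatio a b ξ).re * normSq (1 + (b : ℂ) * ξ ^ 2) =
      1 + (a + b) * (ξ.re ^ 2 - ξ.im ^ 2) + a * b * (ξ.re ^ 2 + ξ.im ^ 2) ^ 2 := by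
  rw [← re_mul_ofReal, quadRatio_mul_normSq h]
  simp only [pow_two, map_add, map_one, map_mul, conj_ofReal, mul_re, mul_im, add_re, add_im,
    one_re, one_im, ofReal_re, ofReal_im, conj_re, conj_im]
  ring

lemma quadRatio_im_mul_normSq (h : (1 + (b : ℂ) * ξ ^ 2) ≠ 0) :
    (quadRatio a b ξ).im * normSq (1 + (b : ℂ) * ξ ^ 2) = 2 * ξ.re * ξ.im * (a - b) := by
  rw [← im_mul_ofReal, quadRatio_mul_normSq h]
  simp only [pow_two, map_add, map_one, map_mul, conj_ofReal, mul_re, mul_im, add_re, add_im,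
    one_re, one_im, ofReal_re, ofReal_im, conj_re, conj_im]
  ring

lemma normSq_quadRatio (h : (1 + (b : ℂ) * ξ ^ 2) ≠ 0) :
    normSq (quadRatio a b ξ) * normSq (1 + (b : ℂ) * ξ ^ 2) = normSq (1 + (a : ℂ) * ξ ^ 2) := by
  rw [quadRatio, normSq_div, div_mul_cancel₀ _ (normSq_pos.mpr h).ne']

lemma normSq_one_add_mul_sq (a : ℝ) (ξ : ℂ) :
    normSq (1 + (a : ℂ) * ξ ^ 2) =
      (1 - a * ξ.im ^ 2) ^ 2 + 2 * a * ξ.re ^ 2 * (1 + a * ξ.im ^ 2) + a ^ 2 * ξ.re ^ 4 := by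
  simp only [normSq_apply, pow_two, mul_re, mul_im, add_re, add_im, one_re, one_im, ofReal_re,
    ofReal_im]
  ring

lemma one_add_mul_sq_ne_zero (hb : 0 ≤ b) (hbξ : b * ξ.im ^ 2 < 1) : 1 + (b : ℂ) * ξ ^ 2 ≠ 0 :=
  fun h ↦ (re_one_add_mul_sq_pos hb hbξ).ne' (by rw [h, zero_re])

lemma re_quadRatio_pos (ha : 0 ≤ a) (hab : a ≤ b) (hbξ : b * ξ.im ^ 2 < 1) :
    0 < (quadRatio a b ξ).re := by
  have hb := ha.trans hab
  have hD := one_add_mul_sq_ne_zero hb hbξ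
  have haξ : a * ξ.im ^ 2 < 1 := by nlinarith [sq_nonneg ξ.im]
  have hP : 0 < 1 + (a + b) * (ξ.re ^ 2 - ξ.im ^ 2) + a * b * (ξ.re ^ 2 + ξ.im ^ 2) ^ 2 := by
    have : 1 + (a + b) * (ξ.re ^ 2 - ξ.im ^ 2) + a * b * (ξ.re ^ 2 + ξ.im ^ 2) ^ 2 =
        (1 - a * ξ.im ^ 2) * (1 - b * ξ.im ^ 2) + (a + b) * ξ.re ^ 2 +
          a * b * ξ.re ^ 2 * (ξ.re ^ 2 + 2 * ξ.im ^ 2) := by ring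
    rw [this]
    have := mul_pos (sub_pos.mpr haξ) (sub_pos.mpr hbξ)
    positivity
  rw [← quadRatio_re_mul_normSq hD] at hP
  exact pos_of_mul_pos_left hP (normSq_nonneg _)

lemma re_mul_im_quadRatio_nonpos (hb : 0 ≤ b) (hab : a ≤ b) (hbξ : b * ξ.im ^ 2 < 1)
    (hξ : 0 ≤ ξ.im) : ξ.re * (quadRatio a b ξ).im ≤ 0 := by
  have hD := one_add_mul_sq_ne_zero hb hbξ
  refine nonpos_of_mul_nonpos_left ?_ (normSq_pos.mpr hD)
  rw [mul_assoc, quadRatio_im_mul_normSq hD]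
  nlinarith [mul_nonneg (mul_nonneg (sq_nonneg ξ.re) hξ) (sub_nonneg.mpr hab)]

lemma re_mul_im_sq_mul_quadRatio_pos (ha : 0 ≤ a) (hab : a ≤ b) (hbξ : b * ξ.im ^ 2 < 1)
    (hξ : 0 < ξ.im) (hk : ξ.re ≠ 0) : 0 < ξ.re * (ξ ^ 2 * quadRatio a b ξ).im := by
  have hD := one_add_mul_sq_ne_zero (ha.trans hab) hbξ
  have hre := quadRatio_re_mul_normSq (a := a) hD
  have him := quadRatio_im_mul_normSq (a := a) hD
  have haξ : a * ξ.im ^ 2 < 1 := by nlinarith [sq_nonneg ξ.im]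
  have hexp : ξ.re * (ξ ^ 2 * quadRatio a b ξ).im * normSq (1 + (b : ℂ) * ξ ^ 2) =
      2 * ξ.re ^ 2 * ξ.im * ((1 - a * ξ.im ^ 2) ^ 2 + a * (b - a) * ξ.im ^ 4 +
        2 * a * ξ.re ^ 2 + a * b * ξ.re ^ 2 * (ξ.re ^ 2 + 2 * ξ.im ^ 2)) := by
    simp only [mul_im, pow_two, mul_re] at hre him ⊢
    linear_combination ξ.re * (ξ.re * ξ.re - ξ.im * ξ.im) * him + 2 * ξ.re * ξ.re * ξ.im * hre
  refine pos_of_mul_pos_left ?_ (normSq_nonneg (1 + (b : ℂ) * ξ ^ 2))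
  rw [hexp]
  have hpos : 0 < (1 - a * ξ.im ^ 2) ^ 2 + a * (b - a) * ξ.im ^ 4 +
      2 * a * ξ.re ^ 2 + a * b * ξ.re ^ 2 * (ξ.re ^ 2 + 2 * ξ.im ^ 2) := by
    have := mul_nonneg (mul_nonneg ha (sub_nonneg.mpr hab)) (pow_nonneg hξ.le 4)
    have := pow_pos (sub_pos.mpr haξ) 2
    have := ha.trans hab
    positivity
  exact mul_pos (by positivity) hpos

lemma norm_quadRatio_lt {c : ℝ} (ha : 0 ≤ a) (hab : a ≤ b) (hbξ : b * ξ.im ^ 2 < 1)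
    (hc : 1 - a * ξ.im ^ 2 < c ^ 2 * (1 - b * ξ.im ^ 2)) : ‖quadRatio a b ξ‖ < c ^ 2 := by
  have hb := ha.trans hab
  have hD := one_add_mul_sq_ne_zero hb hbξ
  have haξ : 0 < 1 - a * ξ.im ^ 2 := by nlinarith [sq_nonneg ξ.im]
  have hc1 : 1 ≤ c ^ 2 := by nlinarith [mul_le_mul_of_nonneg_right hab (sq_nonneg ξ.im)]
  have hc4 : 1 ≤ c ^ 2 * c ^ 2 := one_le_mul_of_one_le_of_one_le hc1 hc1
  have hN : normSq (1 + (a : ℂ) * ξ ^ 2) < (c ^ 2) ^ 2 * normSq (1 + (b : ℂ) * ξ ^ 2) := by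
    rw [normSq_one_add_mul_sq, normSq_one_add_mul_sq]
    have h0 : (1 - a * ξ.im ^ 2) ^ 2 < (c ^ 2) ^ 2 * (1 - b * ξ.im ^ 2) ^ 2 := by
      rw [← mul_pow]; exact pow_lt_pow_left₀ hc haξ.le two_ne_zero
    have h1 : a * (1 + a * ξ.im ^ 2) ≤ (c ^ 2) ^ 2 * (b * (1 + b * ξ.im ^ 2)) := by
      have : a * (1 + a * ξ.im ^ 2) ≤ b * (1 + b * ξ.im ^ 2) := by gcongr
      nlinarith [mul_nonneg hb (by positivity : (0:ℝ) ≤ 1 + b * ξ.im ^ 2)]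
    have h2 : a ^ 2 ≤ (c ^ 2) ^ 2 * b ^ 2 := by
      have : a ^ 2 ≤ b ^ 2 := by gcongr
      nlinarith [sq_nonneg b]
    nlinarith [mul_le_mul_of_nonneg_right h1 (sq_nonneg ξ.re),
      mul_le_mul_of_nonneg_right h2 (pow_nonneg (sq_nonneg ξ.re) 2)]
  rw [← normSq_quadRatio (a := a) hD] at hN
  have hsq : ‖quadRatio a b ξ‖ ^ 2 < (c ^ 2) ^ 2 := by
    rw [Complex.sq_norm]; exact lt_of_mul_lt_mul_right hN (normSq_nonneg _)
  exact (pow_lt_pow_iff_left₀ (norm_nonneg _) (sq_nonneg c) two_ne_zero).mp hsq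

end

lemma one_sub_mul_sq_lt_of_lt_sqrt {a b c α : ℝ} (ha : 0 < a) (hab : a < b) (hc : 1 < c)
    (hα : 0 ≤ α) (hαc : α < √((c ^ 2 - 1) / (b * c ^ 2 - a))) :
    1 - a * α ^ 2 < c ^ 2 * (1 - b * α ^ 2) := by
  have hden : 0 < b * c ^ 2 - a := by nlinarith [one_lt_pow₀ hc two_ne_zero]
  have := (lt_div_iff₀ hden).mp ((Real.lt_sqrt hα).mp hαc)
  linarith

lemma mul_sq_lt_one_of_one_sub_lt {a b c α : ℝ} (hab : a ≤ b) (hc : 1 ≤ c ^ 2)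
    (h : 1 - a * α ^ 2 < c ^ 2 * (1 - b * α ^ 2)) : b * α ^ 2 < 1 := by
  nlinarith [mul_le_mul_of_nonneg_right hab (sq_nonneg α)]

/-- For `0 < a < b`, `c > 1`, `0 < α < α_c`, and every real `k`, with `ξ = k + iα`
and `Q̂₊(ξ) = iξc + iξŜ(ξ)` (principal square root for `Ŝ`):
`-2αc < Re Q̂₊(ξ) < -αc`. -/
theorem re_Qplus_bounds (a b c α : ℝ) (ha : 0 < a) (hab : a < b) (hc : 1 < c)
    (hα : 0 < α) (hαc : α < Real.sqrt ((c ^ 2 - 1) / (b * c ^ 2 - a))) (k : ℝ) :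
    let ξ : ℂ := (k : ℂ) + (α : ℂ) * Complex.I
    let S : ℂ := ((1 + (a : ℂ) * ξ ^ 2) / (1 + (b : ℂ) * ξ ^ 2)) ^ ((1 : ℂ) / 2)
    let Qp : ℂ := Complex.I * ξ * (c : ℂ) + Complex.I * ξ * S
    (-2 * α * c < Qp.re) ∧ (Qp.re < -(α * c)) := by
  intro ξ S Qp
  have hξim : ξ.im = α := by simp [ξ]
  have hkey := one_sub_mul_sq_lt_of_lt_sqrt ha hab hc hα.le hαc
  have hbα := mul_sq_lt_one_of_one_sub_lt hab.le (one_le_pow₀ hc.le) hkey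
  rw [← hξim] at hkey hbα hα
  have hS2 : S ^ 2 = quadRatio a b ξ := cpow_half_sq _
  have hS : 0 < S.re := re_cpow_half_pos (re_quadRatio_pos ha.le hab.le hbα)
  have hsign : ξ.re * (S ^ 2).im ≤ 0 :=
    hS2 ▸ re_mul_im_quadRatio_nonpos (ha.trans hab).le hab.le hbα hα.le
  have hlow : 0 < (ξ * S).im := im_mul_pos hα hS hsign fun hk ↦
    hS2 ▸ re_mul_im_sq_mul_quadRatio_pos ha.le hab.le hbα hα hk
  have hup : (ξ * S).im < ξ.im * c := im_mul_lt hα hS hsign (by linarith)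
    (hS2 ▸ norm_quadRatio_lt ha.le hab.le hbα hkey)
  have hQp : Qp.re = -(ξ.im * c) - (ξ * S).im := by
    simp only [Qp, ξ, mul_re, mul_im, add_re, add_im, I_re, I_im, ofReal_re, ofReal_im]
    ring
  rw [hξim] at hQp hup
  constructor <;> linarith
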